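/- arXiv:1308.0509 — 3 statements merged into one kernel-verified Lean document; each statement's English description precedes it below -/
import Mathlib

section
/- Fix b > 0. Let c : [0,b] → ℝ be continuous with c(z) > 0 for all z ∈ [0,b], and let H : [0,b] → ℝ be continuous. For a Borel measurable control l : [0,∞) → [0,b] define J(l) = ∫_0^∞ exp(−∫_0^m c(l(u)) du) · H(l(m)) dm. Then the supremum of J over all measurable controls equals max_{z ∈ [0,b]} H(z)/c(z), and it is attained by the constant control l ≡ z*, where z* is any maximizer of z ↦ H(z)/c(z) on [0,b]. -/
/-!
For an admissible control `l`, put `g = c ∘ l` and `A m = ∫₀^m g`. Then `exp (-A)` is absolutely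
continuous with derivative `-g exp (-A)` almost everywhere, and `A m → ∞` because `c` is bounded
below by a positive constant on `[0, b]`; hence `∫₀^∞ g exp (-A) = 1`. If `M = max H/c`, then
`H ≤ M c` on `[0, b]`, so `J l ≤ M ∫₀^∞ g exp (-A) = M`, with equality for a constant control at
a maximiser.
-/

open MeasureTheory Set Real Filter Topology

theorem AbsolutelyContinuousOnInterval.comp_contDiff {f φ : ℝ → ℝ} {a b : ℝ}
    (hf : AbsolutelyContinuousOnInterval f a b) (hφ : ContDiff ℝ 1 φ) :
    AbsolutelyContinuousOnInterval (φ ∘ f) a b := by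
  obtain ⟨R, hR⟩ := hf.exists_bound
  obtain ⟨K, hK⟩ := (hφ.contDiffOn (s := Icc (-R) R)).exists_lipschitzOnWith one_ne_zero
    (convex_Icc _ _) isCompact_Icc
  have hmaps : ∀ x ∈ uIcc a b, f x ∈ Icc (-R) R := fun x hx => abs_le.mp (hR x hx)
  rw [absolutelyContinuousOnInterval_iff] at hf ⊢
  intro ε hε
  obtain ⟨δ, hδ, hfδ⟩ := hf (ε / (K + 1)) (by positivity)
  refine ⟨δ, hδ, fun E hE hlen => ?_⟩
  calc ∑ i ∈ Finset.range E.1, dist ((φ ∘ f) (E.2 i).1) ((φ ∘ f) (E.2 i).2)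
      ≤ ∑ i ∈ Finset.range E.1, K * dist (f (E.2 i).1) (f (E.2 i).2) := by
        gcongr with i hi
        exact hK.dist_le_mul _ (hmaps _ (hE.1 i hi).1) _ (hmaps _ (hE.1 i hi).2)
    _ = K * ∑ i ∈ Finset.range E.1, dist (f (E.2 i).1) (f (E.2 i).2) := by
        rw [Finset.mul_sum]
    _ ≤ K * (ε / (K + 1)) := by gcongr; exact (hfδ E hE hlen).le
    _ < ε := by
        rw [mul_div_assoc', div_lt_iff₀ (by positivity)]
        nlinarith

theorem intervalIntegral_mul_exp_neg_primitive {g : ℝ → ℝ} {a b : ℝ}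
    (hg : IntervalIntegrable g volume a b) :
    ∫ x in a..b, g x * exp (-∫ t in a..x, g t) = 1 - exp (-∫ t in a..b, g t) := by
  let F : ℝ → ℝ := fun x => exp (-∫ t in a..x, g t)
  have hF : AbsolutelyContinuousOnInterval F a b :=
    (hg.absolutelyContinuousOnInterval_intervalIntegral left_mem_uIcc).comp_contDiff
      (φ := fun y => exp (-y)) (by fun_prop)
  have hderiv : ∀ᵐ x, x ∈ uIoc a b → deriv F x = -(g x * F x) := by
    filter_upwards [hg.ae_hasDerivAt_integral] with x hx hxab
    have := ((hx (uIoc_subset_uIcc hxab) a left_mem_uIcc).fun_neg.exp).deriv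
    rw [show deriv F x = _ from this]; ring
  calc ∫ x in a..b, g x * F x = -∫ x in a..b, deriv F x := by
        rw [← intervalIntegral.integral_neg]
        exact intervalIntegral.integral_congr_ae
          (hderiv.mono fun x hx hxab => by rw [hx hxab, neg_neg])
    _ = 1 - exp (-∫ t in a..b, g t) := by
        rw [hF.integral_deriv_eq_sub]
        simp [F]

theorem MeasureTheory.LocallyIntegrable.intervalIntegrable {g : ℝ → ℝ}
    (hg : LocallyIntegrable g volume) (a b : ℝ) : IntervalIntegrable g volume a b :=
  (hg.integrableOn_isCompact isCompact_uIcc).intervalIntegrable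

section Discount

variable {g : ℝ → ℝ} {a : ℝ}

theorem continuous_exp_neg_primitive (hg : LocallyIntegrable g volume) :
    Continuous fun x => exp (-∫ t in a..x, g t) :=
  (intervalIntegral.continuous_primitive hg.intervalIntegrable a).neg.rexp

theorem integrableOn_Ioi_mul_exp_neg_primitive (hg : LocallyIntegrable g volume) (hg0 : 0 ≤ g) :
    IntegrableOn (fun x => g x * exp (-∫ t in a..x, g t)) (Ioi a) := by
  have hF := continuous_exp_neg_primitive (a := a) hg
  refine integrableOn_Ioi_of_intervalIntegral_norm_bounded 1 a
    (fun y => ((hg.integrableOn_isCompact isCompact_Icc).mul_continuousOn hF.continuousOn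
      isCompact_Icc).mono_set Ioc_subset_Icc_self) tendsto_id (Eventually.of_forall fun y => ?_)
  have hnorm : ∀ x, ‖g x * exp (-∫ t in a..x, g t)‖ = g x * exp (-∫ t in a..x, g t) :=
    fun x => Real.norm_of_nonneg (mul_nonneg (hg0 x) (exp_pos _).le)
  simp only [hnorm, id, intervalIntegral_mul_exp_neg_primitive (hg.intervalIntegrable a y)]
  linarith [exp_pos (-∫ t in a..y, g t)]

theorem integral_Ioi_mul_exp_neg_primitive (hg : LocallyIntegrable g volume) (hg0 : 0 ≤ g)
    (htop : Tendsto (fun x => ∫ t in a..x, g t) atTop atTop) :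
    ∫ x in Ioi a, g x * exp (-∫ t in a..x, g t) = 1 := by
  have hlim : Tendsto (fun x => ∫ y in a..x, g y * exp (-∫ t in a..y, g t)) atTop (𝓝 1) := by
    simp only [intervalIntegral_mul_exp_neg_primitive (hg.intervalIntegrable a _)]
    simpa using (tendsto_exp_neg_atTop_nhds_zero.comp htop).const_sub 1
  exact tendsto_nhds_unique
    (intervalIntegral_tendsto_integral_Ioi a (integrableOn_Ioi_mul_exp_neg_primitive hg hg0)
      tendsto_id) hlim

theorem tendsto_primitive_atTop_of_le {ε : ℝ} (hg : LocallyIntegrable g volume) (hε : 0 < ε)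
    (hεg : ∀ x, ε ≤ g x) : Tendsto (fun x => ∫ t in a..x, g t) atTop atTop := by
  refine tendsto_atTop_mono' atTop ?_
    ((tendsto_atTop_add_const_right _ (-a) tendsto_id).const_mul_atTop hε)
  filter_upwards [eventually_ge_atTop a] with x hx
  simpa [sub_eq_add_neg, mul_comm] using intervalIntegral.integral_mono_on hx
    intervalIntegrable_const (hg.intervalIntegrable a x)
    fun t _ => hεg t

theorem integral_Ioi_exp_neg_primitive_mul_const_mul (hg : LocallyIntegrable g volume)
    (hg0 : 0 ≤ g) (htop : Tendsto (fun x => ∫ t in a..x, g t) atTop atTop) (M : ℝ) :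
    ∫ x in Ioi a, exp (-∫ t in a..x, g t) * (M * g x) = M := by
  simp_rw [mul_left_comm _ M, integral_const_mul, mul_comm (exp _),
    integral_Ioi_mul_exp_neg_primitive hg hg0 htop, mul_one]

theorem integral_Ioi_exp_neg_primitive_mul_le {h : ℝ → ℝ} {K M : ℝ}
    (hg : LocallyIntegrable g volume) (hg0 : 0 ≤ g)
    (htop : Tendsto (fun x => ∫ t in a..x, g t) atTop atTop) (hh : AEStronglyMeasurable h)
    (hhK : ∀ x, |h x| ≤ K * g x) (hhM : ∀ x, h x ≤ M * g x) :
    ∫ x in Ioi a, exp (-∫ t in a..x, g t) * h x ≤ M := by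
  have hF := continuous_exp_neg_primitive (a := a) hg
  have hgF := integrableOn_Ioi_mul_exp_neg_primitive (a := a) hg hg0
  have hhF : IntegrableOn (fun x => exp (-∫ t in a..x, g t) * h x) (Ioi a) :=
    (hgF.const_mul K).mono' (hF.aestronglyMeasurable.mul hh).restrict
      (Eventually.of_forall fun x => by
        rw [norm_mul, Real.norm_of_nonneg (exp_pos _).le, Real.norm_eq_abs]
        have := mul_le_mul_of_nonneg_left (hhK x) (exp_pos (-∫ t in a..x, g t)).le
        linarith)
  calc ∫ x in Ioi a, exp (-∫ t in a..x, g t) * h x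
      ≤ ∫ x in Ioi a, exp (-∫ t in a..x, g t) * (M * g x) :=
        integral_mono hhF ((hgF.const_mul M).congr (Eventually.of_forall fun x => by ring))
          fun x => mul_le_mul_of_nonneg_left (hhM x) (exp_pos _).le
    _ = M := integral_Ioi_exp_neg_primitive_mul_const_mul hg hg0 htop M

end Discount

noncomputable def discountedReward (c H l : ℝ → ℝ) : ℝ :=
  ∫ m in Ioi 0, exp (-∫ u in 0..m, c (l u)) * H (l m)

theorem discountedReward_const {c H : ℝ → ℝ} {z : ℝ} (hcz : 0 < c z) :
    discountedReward c H (fun _ => z) = H z / c z := by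
  have := integral_Ioi_exp_neg_primitive_mul_const_mul (a := 0) (locallyIntegrable_const _)
    (fun _ => hcz.le) (tendsto_primitive_atTop_of_le (locallyIntegrable_const _) hcz
      fun _ => le_rfl) (H z / c z)
  rwa [div_mul_cancel₀ _ hcz.ne'] at this

theorem discountedReward_le {s : Set ℝ} (hs : IsCompact s) {c H l : ℝ → ℝ} {M : ℝ}
    (hc : ContinuousOn c s) (hcpos : ∀ z ∈ s, 0 < c z) (hH : ContinuousOn H s)
    (hl : Measurable l) (hls : ∀ u, l u ∈ s) (hM : ∀ z ∈ s, H z / c z ≤ M) :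
    discountedReward c H l ≤ M := by
  have hmeas : ∀ {f : ℝ → ℝ}, ContinuousOn f s → Measurable fun u => f (l u) := fun hf =>
    hf.domRestrict.measurable.comp (hl.subtype_mk (h := hls))
  obtain ⟨z₀, hz₀, hmin⟩ := hs.exists_isMinOn ⟨l 0, hls 0⟩ hc
  obtain ⟨C, hC⟩ := hs.exists_bound_of_continuousOn hc
  obtain ⟨K, hK⟩ := hs.exists_bound_of_continuousOn (hH.div hc fun z hz => (hcpos z hz).ne')
  have hlocint : LocallyIntegrable (fun u => c (l u)) volume :=
    (locallyIntegrable_const C).mono (hmeas hc).aestronglyMeasurable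
      (Eventually.of_forall fun u => (hC _ (hls u)).trans (le_abs_self C))
  refine integral_Ioi_exp_neg_primitive_mul_le hlocint (fun u => (hcpos _ (hls u)).le)
    (tendsto_primitive_atTop_of_le hlocint (hcpos z₀ hz₀) fun u => hmin (hls u))
    (hmeas hH).aestronglyMeasurable (K := K) (fun u => ?_)
    fun u => (div_le_iff₀ (hcpos _ (hls u))).mp (hM _ (hls u))
  have hcu := hcpos _ (hls u)
  have := hK _ (hls u)
  rwa [Pi.div_apply, Real.norm_eq_abs, abs_div, abs_of_pos hcu, div_le_iff₀ hcu] at this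

/-- Stationary case of Proposition 3.2: the value of the deterministic control
problem `J(l) = ∫₀^∞ exp(−∫₀^m c(l(u))du) H(l(m)) dm` equals
`max_{z ∈ [0,b]} H(z)/c(z)`, attained by the constant control `l ≡ z*` for any
maximizer `z*`. -/
theorem stmt_2 (b : ℝ) (hb : 0 < b)
    (c H : ℝ → ℝ)
    (hc : ContinuousOn c (Set.Icc 0 b))
    (hcpos : ∀ z ∈ Set.Icc (0:ℝ) b, 0 < c z)
    (hH : ContinuousOn H (Set.Icc 0 b))
    (J : (ℝ → ℝ) → ℝ)
    (hJ : ∀ l : ℝ → ℝ, J l = ∫ m in Set.Ioi (0:ℝ),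
        Real.exp (-(∫ u in (0:ℝ)..m, c (l u))) * H (l m)) :
    (∃ z ∈ Set.Icc (0:ℝ) b, ∀ w ∈ Set.Icc (0:ℝ) b, H w / c w ≤ H z / c z) ∧
    (∀ z ∈ Set.Icc (0:ℝ) b, (∀ w ∈ Set.Icc (0:ℝ) b, H w / c w ≤ H z / c z) →
      (⨆ l : {l : ℝ → ℝ // Measurable l ∧ ∀ u, l u ∈ Set.Icc (0:ℝ) b}, J l.1)
          = H z / c z
        ∧ J (fun _ => z) = H z / c z) := by
  obtain ⟨z₀, hz₀, hmax⟩ := isCompact_Icc.exists_isMaxOn (nonempty_Icc.2 hb.le)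
    (hH.div hc fun z hz => (hcpos z hz).ne')
  refine ⟨⟨z₀, hz₀, fun w hw => hmax hw⟩, fun z hz hzmax => ?_⟩
  have hJconst : J (fun _ => z) = H z / c z := (hJ _).trans (discountedReward_const (hcpos z hz))
  let l₀ : {l : ℝ → ℝ // Measurable l ∧ ∀ u, l u ∈ Icc (0:ℝ) b} :=
    ⟨fun _ => z, measurable_const, fun _ => hz⟩
  have : Nonempty _ := ⟨l₀⟩
  refine ⟨ciSup_eq_of_forall_le_of_forall_lt_exists_gt (fun l => ?_)
    fun w hw => ⟨l₀, hJconst ▸ hw⟩, hJconst⟩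
  exact (hJ l).trans_le (discountedReward_le isCompact_Icc hc hcpos hH l.2.1 l.2.2 hzmax)
end

section
/- Let μ ∈ ℝ, σ > 0, a > 0, ρ > 0, q > 0, and define ψ(λ) = μλ + (1/2)σ²λ² − aλ/(ρ + λ) for λ ≠ −ρ. Then the equation ψ(λ) = q has exactly three real solutions θ₁ > θ₂ > θ₃ (all different from −ρ), and they satisfy θ₁ > 0 > θ₂ > −ρ > θ₃. Moreover ψ is strictly convex on (−ρ, ∞), θ₁ = sup{λ ≥ 0 : ψ(λ) = q} (i.e. θ₁ = Φ(q)), and the derivatives at the roots satisfy ψ'(θ₁) > 0, ψ'(θ₂) < 0, and ψ'(θ₃) < 0. -/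
/-!
Clearing the denominator turns `ψ(λ) = q` into the cubic
`p(λ) = (ρ+λ)(μλ + σ²λ²/2 - q) - aλ`, which has positive leading coefficient, `p(-ρ) = aρ > 0`
and `p(0) = -ρq < 0`; the intermediate value theorem gives a root in each of `(-∞, -ρ)`,
`(-ρ, 0)` and `(0, ∞)`, and a cubic has no others. On `(-ρ, ∞)` the derivative
`ψ'(λ) = μ + σ²λ - aρ/(ρ+λ)²` is strictly increasing. At a root, `λ ψ'(λ) = q + σ²λ²/2 +
aλ²/(ρ+λ)² > 0`, so `ψ'` has the sign of the root.
-/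

open Filter Polynomial

theorem eq_or_eq_or_eq_of_cubic_eq_zero {K : Type*} [Field K] {c₃ c₂ c₁ c₀ x y z t : K}
    (h₃ : c₃ ≠ 0) (hxy : x ≠ y) (hxz : x ≠ z) (hyz : y ≠ z)
    (hx : c₃*x^3 + c₂*x^2 + c₁*x + c₀ = 0) (hy : c₃*y^3 + c₂*y^2 + c₁*y + c₀ = 0)
    (hz : c₃*z^3 + c₂*z^2 + c₁*z + c₀ = 0) (ht : c₃*t^3 + c₂*t^2 + c₁*t + c₀ = 0) :
    t = x ∨ t = y ∨ t = z := by
  -- Lagrange interpolation at `x`, `y`, `z` of the quadratic `c₃s³ + c₂s² + c₁s + c₀ - c₃(s-x)(s-y)(s-z)`.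
  have key : (x-y)*(x-z)*(y-z) * (c₃*(t-x)*(t-y)*(t-z)) = 0 := by
    linear_combination (x-y)*(x-z)*(y-z)*ht - (y-z)*(t-y)*(t-z)*hx
      + (x-z)*(t-x)*(t-z)*hy - (x-y)*(t-x)*(t-y)*hz
  simpa [sub_eq_zero, hxy, hxz, hyz, h₃, or_assoc] using key

theorem tendsto_cubic_atTop {c₃ : ℝ} (h₃ : 0 < c₃) (c₂ c₁ c₀ : ℝ) :
    Tendsto (fun x => c₃*x^3 + c₂*x^2 + c₁*x + c₀) atTop atTop := by
  convert (C c₃ * X^3 + C c₂ * X^2 + C c₁ * X + C c₀).tendsto_atTop_of_leadingCoeff_nonneg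
    (by rw [degree_cubic h₃.ne']; norm_num) (by rw [leadingCoeff_cubic h₃.ne']; exact h₃.le)
    using 2
  simp

theorem tendsto_cubic_atBot {c₃ : ℝ} (h₃ : 0 < c₃) (c₂ c₁ c₀ : ℝ) :
    Tendsto (fun x => c₃*x^3 + c₂*x^2 + c₁*x + c₀) atBot atBot := by
  rw [← tendsto_neg_atTop_iff]
  convert (tendsto_cubic_atTop h₃ (-c₂) c₁ (-c₀)).comp tendsto_neg_atBot_atTop using 2
  simp only [Function.comp_apply]
  ring

theorem exists_gt_eq_zero_of_tendsto_atTop {f : ℝ → ℝ} (hf : Continuous f)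
    (hlim : Tendsto f atTop atTop) {y : ℝ} (hy : f y < 0) : ∃ r, y < r ∧ f r = 0 := by
  obtain ⟨M, hM, hyM⟩ := ((hlim.eventually_gt_atTop 0).and (eventually_gt_atTop y)).exists
  obtain ⟨r, ⟨hyr, -⟩, hr⟩ := intermediate_value_Ioo hyM.le hf.continuousOn ⟨hy, hM⟩
  exact ⟨r, hyr, hr⟩

theorem exists_lt_eq_zero_of_tendsto_atBot {f : ℝ → ℝ} (hf : Continuous f)
    (hlim : Tendsto f atBot atBot) {x : ℝ} (hx : 0 < f x) : ∃ r, r < x ∧ f r = 0 := by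
  obtain ⟨M, hM, hMx⟩ := ((hlim.eventually_lt_atBot 0).and (eventually_lt_atBot x)).exists
  obtain ⟨r, ⟨-, hrx⟩, hr⟩ := intermediate_value_Ioo hMx.le hf.continuousOn ⟨hM, hx⟩
  exact ⟨r, hrx, hr⟩

noncomputable def laplaceExponent (μ σ a ρ l : ℝ) : ℝ := μ*l + σ^2*l^2/2 - a*l/(ρ+l)

section
variable {μ σ a ρ : ℝ}

theorem laplaceExponent_sub_eq_div {l : ℝ} (q : ℝ) (hl : ρ + l ≠ 0) :
    laplaceExponent μ σ a ρ l - q = ((ρ+l)*(μ*l + σ^2*l^2/2 - q) - a*l) / (ρ+l) := by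
  unfold laplaceExponent
  field_simp
  ring

theorem hasDerivAt_laplaceExponent {l : ℝ} (hl : ρ + l ≠ 0) :
    HasDerivAt (laplaceExponent μ σ a ρ) (μ + σ^2*l - a*ρ/(ρ+l)^2) l := by
  have := (((hasDerivAt_id l).const_mul μ).add (((hasDerivAt_pow 2 l).const_mul (σ^2)).div_const 2)).sub
    (((hasDerivAt_id l).const_mul a).div ((hasDerivAt_id l).const_add ρ) hl)
  refine this.congr_deriv ?_
  simp only [id]
  field_simp
  ring

theorem mul_deriv_laplaceExponent {l : ℝ} (hl : ρ + l ≠ 0) :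
    l * deriv (laplaceExponent μ σ a ρ) l
      = laplaceExponent μ σ a ρ l + σ^2*l^2/2 + a*l^2/(ρ+l)^2 := by
  rw [(hasDerivAt_laplaceExponent hl).deriv]
  unfold laplaceExponent
  field_simp
  ring

theorem strictConvexOn_laplaceExponent (hσ : σ ≠ 0) (ha : 0 ≤ a) (hρ : 0 ≤ ρ) :
    StrictConvexOn ℝ (Set.Ioi (-ρ)) (laplaceExponent μ σ a ρ) := by
  have hpos {x : ℝ} (hx : x ∈ Set.Ioi (-ρ)) : 0 < ρ + x := by
    rw [Set.mem_Ioi] at hx; linarith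
  refine StrictMonoOn.strictConvexOn_of_deriv (convex_Ioi _)
    (fun x hx => (hasDerivAt_laplaceExponent (hpos hx).ne').continuousAt.continuousWithinAt) ?_
  rw [interior_Ioi]
  intro x hx y hy hxy
  rw [(hasDerivAt_laplaceExponent (hpos hx).ne').deriv,
    (hasDerivAt_laplaceExponent (hpos hy).ne').deriv]
  have hsq : a*ρ/(ρ+y)^2 ≤ a*ρ/(ρ+x)^2 := by
    have := hpos hx
    gcongr
  have hlin : σ^2*x < σ^2*y := by gcongr
  linarith
theorem exists_roots_laplaceExponent {q : ℝ} (hσ : σ ≠ 0) (ha : 0 < a) (hρ : 0 < ρ) (hq : 0 < q) :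
    ∃ θ₁ θ₂ θ₃ : ℝ, 0 < θ₁ ∧ θ₂ < 0 ∧ -ρ < θ₂ ∧ θ₃ < -ρ ∧
      laplaceExponent μ σ a ρ θ₁ = q ∧ laplaceExponent μ σ a ρ θ₂ = q ∧
      laplaceExponent μ σ a ρ θ₃ = q ∧
      ∀ l : ℝ, l ≠ -ρ → laplaceExponent μ σ a ρ l = q → l = θ₁ ∨ l = θ₂ ∨ l = θ₃ := by
  set p : ℝ → ℝ := fun l => σ^2/2*l^3 + (μ + ρ*σ^2/2)*l^2 + (ρ*μ - q - a)*l + -(ρ*q)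
  have hp (l : ℝ) : p l = (ρ+l)*(μ*l + σ^2*l^2/2 - q) - a*l := by ring
  have hroot {l : ℝ} (hl : l ≠ -ρ) : laplaceExponent μ σ a ρ l = q ↔ p l = 0 := by
    have h0 : ρ + l ≠ 0 := by contrapose! hl; linarith
    rw [← sub_eq_zero, laplaceExponent_sub_eq_div q h0, div_eq_zero_iff, hp]
    simp [h0]
  have h₃ : 0 < σ^2/2 := by positivity
  have hcont : Continuous p := by fun_prop
  have hpρ : 0 < p (-ρ) := by rw [hp]; nlinarith
  have hp0 : p 0 < 0 := by rw [hp]; nlinarith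
  obtain ⟨θ₁, hθ₁, hpθ₁⟩ :=
    exists_gt_eq_zero_of_tendsto_atTop hcont (tendsto_cubic_atTop h₃ _ _ _) hp0
  obtain ⟨θ₂, ⟨hθ₂ρ, hθ₂⟩, hpθ₂⟩ :=
    intermediate_value_Ioo' (by linarith : -ρ ≤ 0) hcont.continuousOn ⟨hp0, hpρ⟩
  obtain ⟨θ₃, hθ₃, hpθ₃⟩ :=
    exists_lt_eq_zero_of_tendsto_atBot hcont (tendsto_cubic_atBot h₃ _ _ _) hpρ
  refine ⟨θ₁, θ₂, θ₃, hθ₁, hθ₂, hθ₂ρ, hθ₃, (hroot (by linarith)).2 hpθ₁, (hroot hθ₂ρ.ne').2 hpθ₂,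
    (hroot hθ₃.ne).2 hpθ₃, fun l hl hlq => ?_⟩
  exact eq_or_eq_or_eq_of_cubic_eq_zero h₃.ne' (by linarith : θ₂ < θ₁).ne'
    (by linarith : θ₃ < θ₁).ne' (by linarith : θ₃ < θ₂).ne' hpθ₁ hpθ₂ hpθ₃ ((hroot hl).1 hlq)

end

/-- Root structure of `ψ(λ) = q` for the jump-diffusion Laplace exponent
`ψ(λ) = μλ + σ²λ²/2 − aλ/(ρ+λ)`: exactly three real solutions
`θ₁ > 0 > θ₂ > −ρ > θ₃`, with `ψ` strictly convex on `(−ρ,∞)`,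
`θ₁ = Φ(q) = sup{λ ≥ 0 : ψ(λ) = q}`, and `ψ'(θ₁) > 0`, `ψ'(θ₂) < 0`,
`ψ'(θ₃) < 0`. -/
theorem stmt_7 (μ σ a ρ q : ℝ) (hσ : 0 < σ) (ha : 0 < a) (hρ : 0 < ρ) (hq : 0 < q)
    (ψ : ℝ → ℝ)
    (hψ : ∀ l : ℝ, ψ l = μ*l + σ^2*l^2/2 - a*l/(ρ+l)) :
    ∃ θ₁ θ₂ θ₃ : ℝ,
      0 < θ₁ ∧ θ₂ < 0 ∧ -ρ < θ₂ ∧ θ₃ < -ρ ∧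
      ψ θ₁ = q ∧ ψ θ₂ = q ∧ ψ θ₃ = q ∧
      (∀ l : ℝ, l ≠ -ρ → ψ l = q → l = θ₁ ∨ l = θ₂ ∨ l = θ₃) ∧
      StrictConvexOn ℝ (Set.Ioi (-ρ)) ψ ∧
      θ₁ = sSup {l : ℝ | 0 ≤ l ∧ ψ l = q} ∧
      0 < deriv ψ θ₁ ∧ deriv ψ θ₂ < 0 ∧ deriv ψ θ₃ < 0 := by
  obtain rfl : ψ = laplaceExponent μ σ a ρ := funext hψ
  obtain ⟨θ₁, θ₂, θ₃, hθ₁, hθ₂, hθ₂ρ, hθ₃ρ, hψ₁, hψ₂, hψ₃, huniq⟩ :=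
    exists_roots_laplaceExponent hσ.ne' ha hρ hq
  have hderiv {θ : ℝ} (hθ : θ ≠ -ρ) (hψθ : laplaceExponent μ σ a ρ θ = q) :
      0 < θ * deriv (laplaceExponent μ σ a ρ) θ := by
    rw [mul_deriv_laplaceExponent (by contrapose! hθ; linarith), hψθ]
    positivity
  have hΦ : {l | 0 ≤ l ∧ laplaceExponent μ σ a ρ l = q} = {θ₁} := by
    ext l
    refine ⟨fun ⟨hl, hlq⟩ => ?_, fun hl => ⟨hl ▸ hθ₁.le, hl ▸ hψ₁⟩⟩
    rcases huniq l (by linarith) hlq with h | h | h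
    · exact h
    all_goals linarith
  refine ⟨θ₁, θ₂, θ₃, hθ₁, hθ₂, hθ₂ρ, hθ₃ρ, hψ₁, hψ₂, hψ₃, huniq,
    strictConvexOn_laplaceExponent hσ.ne' ha.le hρ.le, by rw [hΦ, csSup_singleton],
    pos_of_mul_pos_right (hderiv (by linarith) hψ₁) hθ₁.le,
    neg_of_mul_pos_right (hderiv hθ₂ρ.ne' hψ₂) hθ₂.le,
    neg_of_mul_pos_right (hderiv hθ₃ρ.ne hψ₃) (by linarith)⟩
end

section
/- Let μ ∈ ℝ, σ > 0, a > 0, ρ > 0, q > 0, define ψ(λ) = μλ + (1/2)σ²λ² − aλ/(ρ + λ), and let θ₁ > 0 > θ₂ > −ρ > θ₃ be the three distinct real solutions of ψ(λ) = q. Define W : [0,∞) → ℝ by W(x) = e^{θ₁x}/ψ'(θ₁) + e^{θ₂x}/ψ'(θ₂) + e^{θ₃x}/ψ'(θ₃). Then for every β > θ₁, ∫_0^∞ e^{−βx} W(x) dx = 1/(ψ(β) − q). -/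
open MeasureTheory Real Filter Topology

/-!
Multiplying by `ρ + λ` turns `ψ(λ) - q` into a cubic with leading coefficient `σ²/2` and roots
`θ₁, θ₂, θ₃`, so `ψ(λ) - q = (σ²/2)(λ - θ₁)(λ - θ₂)(λ - θ₃)/(ρ + λ)` and hence
`ψ'(θᵢ) = (σ²/2) ∏_{j ≠ i} (θᵢ - θⱼ)/(ρ + θᵢ)`. The Laplace transform of `W` at `β` is
`∑ᵢ 1/((β - θᵢ) ψ'(θᵢ))`, which is the partial fraction decomposition of
`(ρ + β)/((σ²/2) ∏ⱼ (β - θⱼ)) = 1/(ψ(β) - q)`.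
-/

theorem cubic_eq_mul_sub_mul_sub_mul_sub {R : Type*} [CommRing R] [IsDomain R]
    {A B C D r₁ r₂ r₃ : R} (h₁₂ : r₁ ≠ r₂) (h₁₃ : r₁ ≠ r₃) (h₂₃ : r₂ ≠ r₃)
    (hr₁ : A * r₁ ^ 3 + B * r₁ ^ 2 + C * r₁ + D = 0)
    (hr₂ : A * r₂ ^ 3 + B * r₂ ^ 2 + C * r₂ + D = 0)
    (hr₃ : A * r₃ ^ 3 + B * r₃ ^ 2 + C * r₃ + D = 0) (x : R) :
    A * x ^ 3 + B * x ^ 2 + C * x + D = A * (x - r₁) * (x - r₂) * (x - r₃) := by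
  have e₁₂ : A * (r₁ ^ 2 + r₁ * r₂ + r₂ ^ 2) + B * (r₁ + r₂) + C = 0 :=
    mul_left_cancel₀ (sub_ne_zero.2 h₁₂) (by linear_combination hr₁ - hr₂)
  have e₂₃ : A * (r₂ ^ 2 + r₂ * r₃ + r₃ ^ 2) + B * (r₂ + r₃) + C = 0 :=
    mul_left_cancel₀ (sub_ne_zero.2 h₂₃) (by linear_combination hr₂ - hr₃)
  have e₁₂₃ : A * (r₁ + r₂ + r₃) + B = 0 :=
    mul_left_cancel₀ (sub_ne_zero.2 h₁₃) (by linear_combination e₁₂ - e₂₃)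
  linear_combination (x ^ 2 - r₁ ^ 2) * e₁₂₃ + (x - r₁) * (e₁₂ - (r₁ + r₂) * e₁₂₃) + hr₁

theorem hasDerivAt_of_eventuallyEq_add_sub_mul {𝕜 : Type*} [NontriviallyNormedField 𝕜]
    {f g : 𝕜 → 𝕜} {c r : 𝕜} (hg : DifferentiableAt 𝕜 g r)
    (hf : f =ᶠ[𝓝 r] fun x => c + (x - r) * g x) : HasDerivAt f (g r) r := by
  have h := (((hasDerivAt_id r).sub_const r).mul hg.hasDerivAt).const_add c
  simp only [id, sub_self, zero_mul, one_mul, add_zero] at h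
  exact h.congr_of_eventuallyEq hf

theorem deriv_eq_of_sub_eq_cubic_div {ψ : ℝ → ℝ} {c ρ q r₁ r₂ r₃ : ℝ}
    (hfac : ∀ l, ρ + l ≠ 0 → ψ l - q = c * (l - r₁) * (l - r₂) * (l - r₃) / (ρ + l))
    (hr₁ : ρ + r₁ ≠ 0) :
    deriv ψ r₁ = c * (r₁ - r₂) * (r₁ - r₃) / (ρ + r₁) := by
  refine (hasDerivAt_of_eventuallyEq_add_sub_mul (c := q)
    (g := fun l => c * (l - r₂) * (l - r₃) / (ρ + l)) ?_ ?_).deriv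
  · fun_prop (disch := exact hr₁)
  · filter_upwards [(continuous_const.add continuous_id).continuousAt.eventually_ne hr₁]
      with l hl
    linear_combination hfac l hl

theorem one_div_partial_fractions_three {K : Type*} [Field K] {c s b r₁ r₂ r₃ : K}
    (h₁₂ : r₁ ≠ r₂) (h₁₃ : r₁ ≠ r₃) (h₂₃ : r₂ ≠ r₃)
    (hb₁ : b ≠ r₁) (hb₂ : b ≠ r₂) (hb₃ : b ≠ r₃) :
    1 / ((b - r₁) * (c * (r₁ - r₂) * (r₁ - r₃) / (s + r₁)))
      + 1 / ((b - r₂) * (c * (r₂ - r₁) * (r₂ - r₃) / (s + r₂)))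
      + 1 / ((b - r₃) * (c * (r₃ - r₁) * (r₃ - r₂) / (s + r₃)))
      = 1 / (c * (b - r₁) * (b - r₂) * (b - r₃) / (s + b)) := by
  rcases eq_or_ne c 0 with rfl | hc
  · simp -- both sides are junk values `1 / 0 = 0`
  simp only [one_div_div, mul_div_assoc']
  field_simp [sub_ne_zero]
  ring

theorem exp_neg_mul_mul_exp_div (β θ d x : ℝ) :
    exp (-β * x) * (exp (θ * x) / d) = exp ((θ - β) * x) / d := by
  rw [mul_div_assoc', ← exp_add]
  ring_nf

section Laplace

variable {β θ : ℝ}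

theorem integrableOn_exp_neg_mul_mul_exp_div (h : θ < β) (d : ℝ) :
    IntegrableOn (fun x => exp (-β * x) * (exp (θ * x) / d)) (Set.Ioi 0) := by
  simp_rw [exp_neg_mul_mul_exp_div]
  exact (integrableOn_exp_mul_Ioi (by linarith) 0).div_const d

theorem integral_exp_neg_mul_mul_exp_div (h : θ < β) (d : ℝ) :
    ∫ x in Set.Ioi 0, exp (-β * x) * (exp (θ * x) / d) = 1 / ((β - θ) * d) := by
  simp_rw [exp_neg_mul_mul_exp_div]
  rw [integral_div, integral_exp_mul_Ioi (by linarith), mul_zero, exp_zero, neg_div, ← div_neg,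
    neg_sub, div_div]

theorem integral_exp_neg_mul_mul_add_three {θ₁ θ₂ θ₃ : ℝ}
    (h₁ : θ₁ < β) (h₂ : θ₂ < β) (h₃ : θ₃ < β) (d₁ d₂ d₃ : ℝ) :
    ∫ x in Set.Ioi 0,
        exp (-β * x) * (exp (θ₁ * x) / d₁ + exp (θ₂ * x) / d₂ + exp (θ₃ * x) / d₃)
      = 1 / ((β - θ₁) * d₁) + 1 / ((β - θ₂) * d₂) + 1 / ((β - θ₃) * d₃) := by
  simp_rw [mul_add]
  rw [integral_add ?_ (integrableOn_exp_neg_mul_mul_exp_div h₃ d₃),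
    integral_add (integrableOn_exp_neg_mul_mul_exp_div h₁ d₁)
      (integrableOn_exp_neg_mul_mul_exp_div h₂ d₂),
    integral_exp_neg_mul_mul_exp_div h₁, integral_exp_neg_mul_mul_exp_div h₂,
    integral_exp_neg_mul_mul_exp_div h₃]
  exact (integrableOn_exp_neg_mul_mul_exp_div h₁ d₁).add
    (integrableOn_exp_neg_mul_mul_exp_div h₂ d₂)

end Laplace

noncomputable def jumpDiffusionExponent (μ σ a ρ l : ℝ) : ℝ :=
  μ * l + σ ^ 2 * l ^ 2 / 2 - a * l / (ρ + l)

section JumpDiffusion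

variable {μ σ a ρ q : ℝ}

theorem jumpDiffusionExponent_sub_mul {l : ℝ} (hl : ρ + l ≠ 0) :
    (jumpDiffusionExponent μ σ a ρ l - q) * (ρ + l)
      = σ ^ 2 / 2 * l ^ 3 + (μ + σ ^ 2 * ρ / 2) * l ^ 2 + (μ * ρ - a - q) * l + -(q * ρ) := by
  unfold jumpDiffusionExponent
  field_simp
  ring

theorem jumpDiffusionExponent_sub_eq {θ₁ θ₂ θ₃ : ℝ}
    (h₁₂ : θ₁ ≠ θ₂) (h₁₃ : θ₁ ≠ θ₃) (h₂₃ : θ₂ ≠ θ₃)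
    (hρ₁ : ρ + θ₁ ≠ 0) (hρ₂ : ρ + θ₂ ≠ 0) (hρ₃ : ρ + θ₃ ≠ 0)
    (hq₁ : jumpDiffusionExponent μ σ a ρ θ₁ = q) (hq₂ : jumpDiffusionExponent μ σ a ρ θ₂ = q)
    (hq₃ : jumpDiffusionExponent μ σ a ρ θ₃ = q) {l : ℝ} (hl : ρ + l ≠ 0) :
    jumpDiffusionExponent μ σ a ρ l - q
      = σ ^ 2 / 2 * (l - θ₁) * (l - θ₂) * (l - θ₃) / (ρ + l) := by
  have root : ∀ θ, ρ + θ ≠ 0 → jumpDiffusionExponent μ σ a ρ θ = q →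
      σ ^ 2 / 2 * θ ^ 3 + (μ + σ ^ 2 * ρ / 2) * θ ^ 2 + (μ * ρ - a - q) * θ + -(q * ρ) = 0 :=
    fun θ hθ hq => by rw [← jumpDiffusionExponent_sub_mul hθ, hq, sub_self, zero_mul]
  rw [eq_div_iff hl, jumpDiffusionExponent_sub_mul hl, cubic_eq_mul_sub_mul_sub_mul_sub h₁₂ h₁₃
    h₂₃ (root θ₁ hρ₁ hq₁) (root θ₂ hρ₂ hq₂) (root θ₃ hρ₃ hq₃)]

end JumpDiffusion

theorem stmt_11_general (μ σ a ρ q : ℝ)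
    (ψ : ℝ → ℝ)
    (hψ : ∀ l : ℝ, ψ l = μ*l + σ^2*l^2/2 - a*l/(ρ+l))
    (θ₁ θ₂ θ₃ : ℝ)
    (h1 : 0 < θ₁) (h2 : θ₂ < 0) (h2' : -ρ < θ₂) (h3 : θ₃ < -ρ)
    (hq1 : ψ θ₁ = q) (hq2 : ψ θ₂ = q) (hq3 : ψ θ₃ = q)
    (W : ℝ → ℝ)
    (hW : ∀ x : ℝ, W x = Real.exp (θ₁*x) / deriv ψ θ₁
      + Real.exp (θ₂*x) / deriv ψ θ₂ + Real.exp (θ₃*x) / deriv ψ θ₃) :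
    ∀ β : ℝ, θ₁ < β →
      ∫ x in Set.Ioi (0:ℝ), Real.exp (-β*x) * W x = 1/(ψ β - q) := by
  intro β hβ
  obtain rfl : ψ = jumpDiffusionExponent μ σ a ρ := funext hψ
  obtain rfl : W = _ := funext hW
  have hρ₁ : ρ + θ₁ ≠ 0 := ne_of_gt (by linarith)
  have hρ₂ : ρ + θ₂ ≠ 0 := ne_of_gt (by linarith)
  have hρ₃ : ρ + θ₃ ≠ 0 := ne_of_lt (by linarith)
  have hfac : ∀ l, ρ + l ≠ 0 → jumpDiffusionExponent μ σ a ρ l - q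
      = σ ^ 2 / 2 * (l - θ₁) * (l - θ₂) * (l - θ₃) / (ρ + l) := fun l hl =>
    jumpDiffusionExponent_sub_eq (by linarith) (by linarith) (by linarith) hρ₁ hρ₂ hρ₃
      hq1 hq2 hq3 hl
  rw [integral_exp_neg_mul_mul_add_three hβ (by linarith) (by linarith),
    deriv_eq_of_sub_eq_cubic_div hfac hρ₁,
    deriv_eq_of_sub_eq_cubic_div (c := σ ^ 2 / 2) (r₁ := θ₂) (r₂ := θ₁) (r₃ := θ₃)
      (fun l hl => (hfac l hl).trans (by ring)) hρ₂,
    deriv_eq_of_sub_eq_cubic_div (c := σ ^ 2 / 2) (r₁ := θ₃) (r₂ := θ₁) (r₃ := θ₂)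
      (fun l hl => (hfac l hl).trans (by ring)) hρ₃,
    hfac β (ne_of_gt (by linarith))]
  exact one_div_partial_fractions_three (by linarith) (by linarith) (by linarith)
    (by linarith) (by linarith) (by linarith)

/-- Laplace transform of the explicit three-exponential `q`-scale function
`W(x) = Σᵢ e^{θᵢx}/ψ'(θᵢ)` for the jump diffusion:
`∫₀^∞ e^{−βx} W(x) dx = 1/(ψ(β) − q)` for every `β > θ₁`. -/
theorem stmt_11 (μ σ a ρ q : ℝ) (hσ : 0 < σ) (ha : 0 < a) (hρ : 0 < ρ) (hq : 0 < q)
    (ψ : ℝ → ℝ)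
    (hψ : ∀ l : ℝ, ψ l = μ*l + σ^2*l^2/2 - a*l/(ρ+l))
    (θ₁ θ₂ θ₃ : ℝ)
    (h1 : 0 < θ₁) (h2 : θ₂ < 0) (h2' : -ρ < θ₂) (h3 : θ₃ < -ρ)
    (hq1 : ψ θ₁ = q) (hq2 : ψ θ₂ = q) (hq3 : ψ θ₃ = q)
    (W : ℝ → ℝ)
    (hW : ∀ x : ℝ, W x = Real.exp (θ₁*x) / deriv ψ θ₁
      + Real.exp (θ₂*x) / deriv ψ θ₂ + Real.exp (θ₃*x) / deriv ψ θ₃) :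
    ∀ β : ℝ, θ₁ < β →
      ∫ x in Set.Ioi (0:ℝ), Real.exp (-β*x) * W x = 1/(ψ β - q) :=
  stmt_11_general μ σ a ρ q ψ hψ θ₁ θ₂ θ₃ h1 h2 h2' h3 hq1 hq2 hq3 W hW
end
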